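/- arXiv:2404.10993 — 2 statements merged into one kernel-verified Lean document; each statement's English description precedes it below -/
import Mathlib

section
/- If x^k ∈ dom(F) is not weakly Pareto optimal, then d^k := p_α(x^k) - x^k ≠ 0 and there exists δ > 0 such that for all t ∈ (0, δ] and all j = 1,…,m, G_j(x^k + t d^k) ≤ G_j(x^k) + t⟨∇G_j(x^k), d^k⟩ + t(γ/2)‖d^k‖². Consequently, the backtracking line search of the MPG algorithm terminates in finitely many steps. -/
open RealInnerProductSpace Filter Topology

/-!
If `p_α(x) = x`, then `x` minimizes the prox model, whose value at `x` is `0`. Take `y` with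
`F_j y < F_j x` for all `j`. By convexity of `G_j` (gradient inequality) and of `H_j`, the model at
`x + t (y - x)` is at most `t · (F_j y - F_j x) + t² ‖y - x‖² / (2α)` for the index `j` realising
the maximum, which is negative for small `t > 0`: a contradiction.

The sufficient-decrease inequality for small steps is the definition of the directional derivative
`⟪∇G_j(x), d⟫` of `G_j` along `d`, with positive slack `t · γ/2 · ‖d‖²`; finitely many `j` give a
common `δ`.
-/

section Gradient

variable {E : Type*} [NormedAddCommGroup E] [InnerProductSpace ℝ E] [CompleteSpace E]
  {G : E → ℝ} {g x y : E}

theorem HasGradientAt.hasDerivAt_comp_add_smul (h : HasGradientAt G g x) (v : E) :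
    HasDerivAt (fun t : ℝ => G (x + t • v)) ⟪g, v⟫ 0 := by
  have hline : HasDerivAt (fun t : ℝ => x + t • v) v 0 := by
    simpa using ((hasDerivAt_id (0 : ℝ)).smul_const v).const_add x
  have hG : HasFDerivAt G (InnerProductSpace.toDual ℝ E g : E →L[ℝ] ℝ) (x + (0 : ℝ) • v) := by
    simpa using hasGradientAt_iff_hasFDerivAt.mp h
  have hcomp := hG.comp_hasDerivAt 0 hline
  simp only [InnerProductSpace.toDual_apply_apply] at hcomp
  exact hcomp

theorem ConvexOn.inner_gradient_le_sub {s : Set E} (hconv : ConvexOn ℝ s G) (hx : x ∈ s)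
    (hy : y ∈ s) (h : HasGradientAt G g x) : ⟪g, y - x⟫ ≤ G y - G x := by
  have hline : ConvexOn ℝ (Set.Icc 0 1) (fun t : ℝ => G (x + t • (y - x))) := by
    have := (hconv.comp_affineMap (AffineMap.lineMap x y)).subset ?_ (convex_Icc 0 1)
    · simpa [Function.comp_def, AffineMap.lineMap_apply, add_comm] using this
    · intro t ht
      simpa [AffineMap.lineMap_apply] using hconv.1.lineMap_mem hx hy ht
  simpa [slope_def_field] using hline.le_slope_of_hasDerivAt (by simp) (by simp) one_pos
    (h.hasDerivAt_comp_add_smul (y - x))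

theorem inner_add_sub_le_mul_sub_of_convexOn {s : Set E} {H : E → ℝ} (hG : ConvexOn ℝ s G)
    (hH : ConvexOn ℝ s H) (hx : x ∈ s) (hy : y ∈ s) (hg : HasGradientAt G g x) {t : ℝ}
    (ht₀ : 0 ≤ t) (ht₁ : t ≤ 1) :
    ⟪g, x + t • (y - x) - x⟫ + H (x + t • (y - x)) - H x ≤ t * (G y + H y - (G x + H x)) := by
  have hlin : ⟪g, x + t • (y - x) - x⟫ ≤ t * (G y - G x) := by
    rw [add_sub_cancel_left, real_inner_smul_right]
    exact mul_le_mul_of_nonneg_left (hG.inner_gradient_le_sub hx hy hg) ht₀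
  have hconv : H (x + t • (y - x)) ≤ (1 - t) * H x + t * H y := by
    have hcomb : x + t • (y - x) = (1 - t) • x + t • y := by module
    rw [hcomb]
    exact hH.2 hx hy (by linarith) ht₀ (by ring)
  linarith

end Gradient

theorem eventually_mul_add_sq_neg {D : ℝ} (hD : D < 0) (K : ℝ) :
    ∀ᶠ t in 𝓝[>] (0 : ℝ), t * D + t ^ 2 * K < 0 := by
  have hlim : Tendsto (fun t : ℝ => D + t * K) (𝓝 0) (𝓝 D) := by
    simpa using ((tendsto_id (x := 𝓝 (0 : ℝ))).mul_const K).const_add D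
  filter_upwards [nhdsWithin_le_nhds (hlim.eventually_lt_const hD), self_mem_nhdsWithin]
    with t hneg (ht : 0 < t)
  have : t * D + t ^ 2 * K = t * (D + t * K) := by ring
  rw [this]
  exact mul_neg_of_pos_of_neg ht hneg

theorem HasDerivAt.eventually_le_add_mul {φ : ℝ → ℝ} {φ' c : ℝ} (h : HasDerivAt φ φ' 0)
    (hc : 0 < c) : ∀ᶠ t in 𝓝[>] (0 : ℝ), φ t ≤ φ 0 + t * φ' + t * c := by
  have hslope := (hasDerivAt_iff_tendsto_slope.mp h).eventually_lt_const
    (lt_add_of_pos_right φ' hc)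
  filter_upwards [nhdsWithin_mono 0 (fun t (ht : 0 < t) => ht.ne') hslope, self_mem_nhdsWithin]
    with t hlt (ht : 0 < t)
  rw [slope_def_field, sub_zero, div_lt_iff₀ ht] at hlt
  linarith

section ProxModel

variable {ι E : Type*} [NormedAddCommGroup E] [InnerProductSpace ℝ E]

/-- The objective whose minimizer over `dom F` is `p_α(x)`, with `g j = ∇G_j(x)`. -/
noncomputable def proxModel (g : ι → E) (H : ι → E → ℝ) (α : ℝ) (x u : E) : ℝ :=
  (⨆ j, (⟪g j, u - x⟫ + H j u - H j x)) + 1 / (2 * α) * ‖u - x‖ ^ 2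

theorem proxModel_self (g : ι → E) (H : ι → E → ℝ) (α : ℝ) (x : E) :
    proxModel g H α x x = 0 := by
  simp [proxModel]

variable [CompleteSpace E] [Finite ι] [Nonempty ι]

theorem exists_proxModel_neg {s : Set E} {G H : ι → E → ℝ} {g : ι → E} {x : E} (α : ℝ)
    (hs : Convex ℝ s) (hG : ∀ j, ConvexOn ℝ s (G j)) (hH : ∀ j, ConvexOn ℝ s (H j))
    (hg : ∀ j, HasGradientAt (G j) (g j) x) (hx : x ∈ s)
    (hdesc : ∃ y ∈ s, ∀ j, G j y + H j y < G j x + H j x) :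
    ∃ u ∈ s, proxModel g H α x u < 0 := by
  obtain ⟨y, hy, hlt⟩ := hdesc
  have hev : ∀ᶠ t in 𝓝[>] (0 : ℝ), ∀ j,
      t * (G j y + H j y - (G j x + H j x)) + t ^ 2 * (1 / (2 * α) * ‖y - x‖ ^ 2) < 0 :=
    eventually_all.mpr fun j => eventually_mul_add_sq_neg (sub_neg.mpr (hlt j)) _
  obtain ⟨t, hneg, ht₀, ht₁⟩ := (hev.and (Ioc_mem_nhdsGT zero_lt_one)).exists
  refine ⟨x + t • (y - x), hs.add_smul_sub_mem hx hy ⟨ht₀.le, ht₁⟩, ?_⟩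
  obtain ⟨j, hj⟩ := exists_eq_ciSup_of_finite
    (f := fun j => ⟪g j, x + t • (y - x) - x⟫ + H j (x + t • (y - x)) - H j x)
  have hnorm : ‖x + t • (y - x) - x‖ ^ 2 = t ^ 2 * ‖y - x‖ ^ 2 := by
    rw [add_sub_cancel_left, norm_smul, mul_pow, Real.norm_eq_abs, sq_abs]
  calc proxModel g H α x (x + t • (y - x))
      ≤ t * (G j y + H j y - (G j x + H j x)) + t ^ 2 * (1 / (2 * α) * ‖y - x‖ ^ 2) := by
        rw [proxModel, ← hj, hnorm]
        linarith [inner_add_sub_le_mul_sub_of_convexOn (hG j) (hH j) hx hy (hg j) ht₀.le ht₁]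
    _ < 0 := hneg j

theorem ne_of_isMinOn_proxModel {s : Set E} {G H : ι → E → ℝ} {g : ι → E} {x p : E} {α : ℝ}
    (hs : Convex ℝ s) (hG : ∀ j, ConvexOn ℝ s (G j)) (hH : ∀ j, ConvexOn ℝ s (H j))
    (hg : ∀ j, HasGradientAt (G j) (g j) x) (hx : x ∈ s)
    (hdesc : ∃ y ∈ s, ∀ j, G j y + H j y < G j x + H j x)
    (hp : IsMinOn (proxModel g H α x) s p) : p ≠ x := by
  rintro rfl
  obtain ⟨u, hu, hneg⟩ := exists_proxModel_neg α hs hG hH hg hx hdesc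
  have hmin : proxModel g H α p p ≤ proxModel g H α p u := isMinOn_iff.mp hp u hu
  rw [proxModel_self] at hmin
  linarith

end ProxModel

theorem exists_Ioc_forall_le_add_inner_add_mul {ι E : Type*} [NormedAddCommGroup E]
    [InnerProductSpace ℝ E] [CompleteSpace E] [Finite ι] {G : ι → E → ℝ} {g : ι → E} {x : E}
    (hg : ∀ j, HasGradientAt (G j) (g j) x) (v : E) {c : ℝ} (hc : 0 < c) :
    ∃ δ > 0, ∀ t ∈ Set.Ioc (0 : ℝ) δ, ∀ j, G j (x + t • v) ≤ G j x + t * ⟪g j, v⟫ + t * c := by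
  have hev : ∀ᶠ t in 𝓝[>] (0 : ℝ), ∀ j, G j (x + t • v) ≤ G j x + t * ⟪g j, v⟫ + t * c :=
    eventually_all.mpr fun j => by
      simpa using ((hg j).hasDerivAt_comp_add_smul v).eventually_le_add_mul hc
  exact mem_nhdsGT_iff_exists_Ioc_subset.mp hev

theorem lineSearch_wellDefined_general {n m : ℕ} (hm : 0 < m)
    (G : Fin m → EuclideanSpace ℝ (Fin n) → ℝ)
    (G' : Fin m → EuclideanSpace ℝ (Fin n) → EuclideanSpace ℝ (Fin n))
    (H : Fin m → EuclideanSpace ℝ (Fin n) → ℝ)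
    (dom : Set (EuclideanSpace ℝ (Fin n)))
    (hGconv : ∀ j, ConvexOn ℝ Set.univ (G j))
    (hGdiff : ∀ j x, HasGradientAt (G j) (G' j x) x)
    (hHconv : ∀ j, ConvexOn ℝ dom (H j))
    (hdomconv : Convex ℝ dom)
    (α γ : ℝ) (hγ : 0 < γ)
    (xk : EuclideanSpace ℝ (Fin n)) (hxk : xk ∈ dom)
    (p : EuclideanSpace ℝ (Fin n))
    (hpmin : IsMinOn
      (fun u => (⨆ j, (⟪G' j xk, u - xk⟫ + H j u - H j xk)) + 1 / (2 * α) * ‖u - xk‖ ^ 2)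
      dom p)
    (hnotWP : ∃ y ∈ dom, ∀ j, G j y + H j y < G j xk + H j xk) :
    p - xk ≠ 0 ∧ ∃ δ > 0, ∀ t ∈ Set.Ioc (0 : ℝ) δ, ∀ j,
      G j (xk + t • (p - xk)) ≤
        G j xk + t * ⟪G' j xk, p - xk⟫ + t * (γ / 2) * ‖p - xk‖ ^ 2 := by
  have : Nonempty (Fin m) := ⟨⟨0, hm⟩⟩
  have hd : p - xk ≠ 0 := sub_ne_zero.mpr <|
    ne_of_isMinOn_proxModel (g := fun j => G' j xk) hdomconv
      (fun j => (hGconv j).subset (Set.subset_univ _) hdomconv) hHconv (fun j => hGdiff j xk)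
      hxk hnotWP hpmin
  obtain ⟨δ, hδ, hstep⟩ := exists_Ioc_forall_le_add_inner_add_mul (fun j => hGdiff j xk)
    (p - xk) (by positivity : 0 < γ / 2 * ‖p - xk‖ ^ 2)
  exact ⟨hd, δ, hδ, fun t ht j => by simpa only [mul_assoc] using hstep t ht j⟩

/-- If `x^k ∈ dom F` is not weakly Pareto optimal, then `d^k = p_α(x^k) - x^k ≠ 0` and there
is `δ > 0` such that the sufficient-decrease test holds for all `t ∈ (0, δ]` and all `j`;
hence the backtracking line search of the MPG algorithm terminates finitely. -/
theorem lineSearch_wellDefined {n m : ℕ} (hm : 0 < m)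
    (G : Fin m → EuclideanSpace ℝ (Fin n) → ℝ)
    (G' : Fin m → EuclideanSpace ℝ (Fin n) → EuclideanSpace ℝ (Fin n))
    (H : Fin m → EuclideanSpace ℝ (Fin n) → ℝ)
    (dom : Set (EuclideanSpace ℝ (Fin n)))
    (hGconv : ∀ j, ConvexOn ℝ Set.univ (G j))
    (hGdiff : ∀ j x, HasGradientAt (G j) (G' j x) x)
    (hG'cont : ∀ j, Continuous (G' j))
    (hHconv : ∀ j, ConvexOn ℝ dom (H j))
    (hHcont : ∀ j, ContinuousOn (H j) dom)
    (hdomne : dom.Nonempty) (hdomcl : IsClosed dom) (hdomconv : Convex ℝ dom)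
    (α γ : ℝ) (hα : 0 < α) (hγ : 0 < γ) (hγ2 : γ < 2 / α)
    (xk : EuclideanSpace ℝ (Fin n)) (hxk : xk ∈ dom)
    (p : EuclideanSpace ℝ (Fin n)) (hp : p ∈ dom)
    (hpmin : IsMinOn
      (fun u => (⨆ j, (⟪G' j xk, u - xk⟫ + H j u - H j xk)) + 1 / (2 * α) * ‖u - xk‖ ^ 2)
      dom p)
    (hnotWP : ∃ y ∈ dom, ∀ j, G j y + H j y < G j xk + H j xk) :
    p - xk ≠ 0 ∧ ∃ δ > 0, ∀ t ∈ Set.Ioc (0 : ℝ) δ, ∀ j,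
      G j (xk + t • (p - xk)) ≤
        G j xk + t * ⟪G' j xk, p - xk⟫ + t * (γ / 2) * ‖p - xk‖ ^ 2 :=
  lineSearch_wellDefined_general hm G G' H dom hGconv hGdiff hHconv hdomconv α γ hγ xk hxk p hpmin
    hnotWP
end

section
/- Suppose all monotonically nonincreasing sequences in Im(F) are bounded below by a point of Im(F) (completeness assumption A1). Then the sequence {x^k} generated by the MPG algorithm is quasi-Fejér convergent to the set Ω := {x ∈ dom(F) : F(x) ⪯ F(x^k) for all k}, with summable errors ε_k := 2α(F_{j*_k}(x^k) - F_{j*_k}(x^{k+1})) + t_k²‖d^k‖², and hence {x^k} is bounded. -/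
/-!
The proximal point `p = p_α(x)` minimizes `mpgModel G' H x + ‖· - x‖² / (2α)` on `dom`, so its
variational inequality compares the model at `p` with the model at any `y ∈ dom`. For `y ∈ Ω` the
model at `y` is nonpositive by the gradient inequality for the convex `G_j`; together with the
sufficient decrease for `j*_k` this bounds `2 t_k ⟪x^k - y, d^k⟫` by `2α` times the decrease of
`F_{j*_k}`, and expanding `‖x^{k+1} - y‖²` gives the quasi-Fejér inequality. Taking `y = x^k`
bounds `t_k ‖d^k‖²` by a multiple of the same decrease, so the errors are dominated by the
telescoping decreases of `∑_j F_j(x^k)`, which (A1) bounds below. The lower bound provided by (A1)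
lies in `Ω`, and quasi-Fejér convergence to one point already bounds the sequence.
-/

open RealInnerProductSpace Set Filter Topology

theorem ConvexOn.add_inner_le_of_hasGradientAt {E : Type*} [NormedAddCommGroup E]
    [InnerProductSpace ℝ E] [CompleteSpace E] {f : E → ℝ} {f' x : E}
    (hf : ConvexOn ℝ univ f) (hd : HasGradientAt f f' x) (y : E) :
    f x + ⟪f', y - x⟫ ≤ f y := by
  have hline : HasDerivAt (f ∘ AffineMap.lineMap x y) ⟪f', y - x⟫ (0 : ℝ) := by
    have hd0 : HasFDerivAt f (InnerProductSpace.toDual ℝ E f')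
        (AffineMap.lineMap x y (0 : ℝ)) := by
      simpa using hd.hasFDerivAt
    simpa using hd0.comp_hasDerivAt (0 : ℝ) AffineMap.hasDerivAt_lineMap
  have hslope := (hf.comp_affineMap (AffineMap.lineMap x y)).le_slope_of_hasDerivAt
    (mem_univ 0) (mem_univ 1) zero_lt_one hline
  simp only [slope, sub_zero, inv_one, Function.comp_apply, AffineMap.lineMap_apply_one,
    AffineMap.lineMap_apply_zero, vsub_eq_sub, smul_eq_mul, one_mul] at hslope
  linarith

theorem ConvexOn.le_add_inner_of_isMinOn_add_norm_sq {E : Type*} [NormedAddCommGroup E]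
    [InnerProductSpace ℝ E] {s : Set E} {ℓ : E → ℝ} (hℓ : ConvexOn ℝ s ℓ) {c : ℝ} {x₀ q u : E}
    (hmin : IsMinOn (fun v => ℓ v + c * ‖v - x₀‖ ^ 2) s q) (hq : q ∈ s) (hu : u ∈ s) :
    ℓ q ≤ ℓ u + 2 * c * ⟪q - x₀, u - q⟫ := by
  have hseg : ∀ r ∈ Ioc (0 : ℝ) 1,
      0 ≤ ℓ u - ℓ q + 2 * c * ⟪q - x₀, u - q⟫ + r * (c * ‖u - q‖ ^ 2) := by
    rintro r ⟨hr0, hr1⟩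
    have hcomb : q + r • (u - q) = (1 - r) • q + r • u := by module
    have hconv := hℓ.2 hq hu (sub_nonneg.2 hr1) hr0.le (by ring)
    have hle := isMinOn_iff.1 hmin _ (hcomb ▸ hℓ.1 hq hu (sub_nonneg.2 hr1) hr0.le (by ring))
    have hsq : ‖q + r • (u - q) - x₀‖ ^ 2
        = ‖q - x₀‖ ^ 2 + 2 * r * ⟪q - x₀, u - q⟫ + r ^ 2 * ‖u - q‖ ^ 2 := by
      rw [show q + r • (u - q) - x₀ = (q - x₀) + r • (u - q) by module, norm_add_sq_real,
        real_inner_smul_right, norm_smul, Real.norm_eq_abs, mul_pow, sq_abs]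
      ring
    rw [← hcomb, smul_eq_mul, smul_eq_mul] at hconv
    simp only [hsq] at hle
    refine nonneg_of_mul_nonneg_right ?_ hr0
    nlinarith
  have hlim : Tendsto (fun r : ℝ => ℓ u - ℓ q + 2 * c * ⟪q - x₀, u - q⟫ + r * (c * ‖u - q‖ ^ 2))
      (𝓝[>] 0) (𝓝 (ℓ u - ℓ q + 2 * c * ⟪q - x₀, u - q⟫)) := by
    refine tendsto_nhdsWithin_of_tendsto_nhds ?_
    simpa using ((continuous_id.mul continuous_const).const_add _).tendsto (0 : ℝ)
  have := ge_of_tendsto hlim (eventually_of_mem (Ioc_mem_nhdsGT zero_lt_one) hseg)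
  linarith

theorem ConvexOn.ciSup {E ι : Type*} [AddCommGroup E] [Module ℝ E] [Finite ι] [Nonempty ι]
    {s : Set E} {f : ι → E → ℝ} (hf : ∀ i, ConvexOn ℝ s (f i)) :
    ConvexOn ℝ s fun x => ⨆ i, f i x := by
  refine ⟨(hf (Classical.arbitrary ι)).1, fun x hx y hy a b ha hb hab => ciSup_le fun i => ?_⟩
  calc f i (a • x + b • y) ≤ a * f i x + b * f i y := (hf i).2 hx hy ha hb hab
    _ ≤ a * (⨆ i, f i x) + b * (⨆ i, f i y) := by
      gcongr <;> exact le_ciSup (f := fun i => f i _) (Finite.bddAbove_range _) i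

theorem summable_sub_succ_of_antitone {f : ℕ → ℝ} (hf : Antitone f) {b : ℝ}
    (hb : ∀ k, b ≤ f k) : Summable fun k => f k - f (k + 1) := by
  refine summable_of_sum_range_le (c := f 0 - b) (fun k => sub_nonneg.2 (hf k.le_succ))
    fun K => ?_
  rw [Finset.sum_range_sub']
  linarith [hb K]

theorem exists_norm_le_of_quasiFejer {E : Type*} [SeminormedAddCommGroup E] {x : ℕ → E} {z : E}
    {ε : ℕ → ℝ} (hε : Summable ε) (hε0 : ∀ k, 0 ≤ ε k)
    (h : ∀ k, ‖x (k + 1) - z‖ ^ 2 ≤ ‖x k - z‖ ^ 2 + ε k) :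
    ∃ M, ∀ k, ‖x k‖ ≤ M := by
  have hsum : ∀ k, ‖x k - z‖ ^ 2 ≤ ‖x 0 - z‖ ^ 2 + ∑' i, ε i := by
    intro k
    have htel : ‖x k - z‖ ^ 2 ≤ ‖x 0 - z‖ ^ 2 + ∑ i ∈ Finset.range k, ε i := by
      induction k with
      | zero => simp
      | succ k ih => rw [Finset.sum_range_succ]; linarith [h k]
    linarith [hε.sum_le_tsum (Finset.range k) fun i _ => hε0 i]
  refine ⟨‖z‖ + √(‖x 0 - z‖ ^ 2 + ∑' i, ε i), fun k => ?_⟩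
  linarith [Real.le_sqrt_of_sq_le (hsum k), norm_le_norm_sub_add (x k) z]

/-- The max-type model whose regularized minimizer is the proximal point `p_α(x)` of MPG. -/
noncomputable def mpgModel {E ι : Type*} [NormedAddCommGroup E] [InnerProductSpace ℝ E]
    (G' : ι → E → E) (H : ι → E → ℝ) (x u : E) : ℝ :=
  ⨆ i, (⟪G' i x, u - x⟫ + H i u - H i x)

section MPGStep

variable {E ι : Type*} [NormedAddCommGroup E] [InnerProductSpace ℝ E]
  {G H : ι → E → ℝ} {G' : ι → E → E} {s : Set E} {α γ t : ℝ} {x p x' y : E} {j : ι}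

theorem mpgModel_self : mpgModel G' H x x = 0 := by
  simp [mpgModel]

theorem le_mpgModel [Finite ι] (j : ι) (u : E) :
    ⟪G' j x, u - x⟫ + H j u - H j x ≤ mpgModel G' H x u :=
  le_ciSup (f := fun i => ⟪G' i x, u - x⟫ + H i u - H i x) (Finite.bddAbove_range _) j

theorem mpgModel_nonpos [CompleteSpace E] (hG : ∀ i, ConvexOn ℝ univ (G i))
    (hG' : ∀ i, HasGradientAt (G i) (G' i x) x) (hy : ∀ i, G i y + H i y ≤ G i x + H i x) :
    mpgModel G' H x y ≤ 0 :=
  Real.iSup_nonpos fun i => by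
    linarith [(hG i).add_inner_le_of_hasGradientAt (hG' i) y, hy i]

theorem convexOn_mpgModel [Finite ι] [Nonempty ι] (hH : ∀ i, ConvexOn ℝ s (H i)) :
    ConvexOn ℝ s (mpgModel G' H x) := by
  refine ConvexOn.ciSup fun i => ?_
  refine ((((innerₛₗ ℝ (G' i x)).convexOn (hH i).1).add (hH i)).add_const
    (-⟪G' i x, x⟫ - H i x)).congr fun u _ => ?_
  simp only [coe_innerₛₗ_apply, Pi.add_apply, inner_sub_right]
  ring

theorem mpgModel_prox [Finite ι] [Nonempty ι] (hα : 0 < α) (hH : ∀ i, ConvexOn ℝ s (H i))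
    (hmin : IsMinOn (fun u => mpgModel G' H x u + 1 / (2 * α) * ‖u - x‖ ^ 2) s p)
    (hp : p ∈ s) (hy : y ∈ s) :
    α * mpgModel G' H x p + ⟪x - y, p - x⟫ + ‖p - x‖ ^ 2 ≤ α * mpgModel G' H x y := by
  have hvi := (convexOn_mpgModel hH).le_add_inner_of_isMinOn_add_norm_sq hmin hp hy
  have hinner : ⟪p - x, y - p⟫ = -⟪x - y, p - x⟫ - ‖p - x‖ ^ 2 := by
    rw [show y - p = -(x - y) - (p - x) by abel, inner_sub_right, inner_neg_right,
      real_inner_self_eq_norm_sq, real_inner_comm]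
  rw [hinner, show 2 * (1 / (2 * α)) = α⁻¹ by field_simp] at hvi
  have := mul_le_mul_of_nonneg_left hvi hα.le
  rw [mul_add, ← mul_assoc, mul_inv_cancel₀ hα.ne', one_mul] at this
  linarith

theorem mpgStep_le (hH : ConvexOn ℝ s (H j)) (hx : x ∈ s) (hp : p ∈ s) (ht0 : 0 ≤ t)
    (ht1 : t ≤ 1) (hx' : x' = x + t • (p - x))
    (hdec : G j x' ≤ G j x + t * ⟪G' j x, p - x⟫ + t * (γ / 2) * ‖p - x‖ ^ 2) :
    G j x' + H j x' ≤ G j x + H j x + t * (⟪G' j x, p - x⟫ + H j p - H j x) +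
      t * (γ / 2) * ‖p - x‖ ^ 2 := by
  have hHx' : H j x' ≤ (1 - t) * H j x + t * H j p := by
    rw [hx', show x + t • (p - x) = (1 - t) • x + t • p by module]
    exact hH.2 hx hp (sub_nonneg.2 ht1) ht0 (by ring)
  linarith

theorem mpgStep_descent [Finite ι] [Nonempty ι] (hα : 0 < α) (hH : ∀ i, ConvexOn ℝ s (H i))
    (hmin : IsMinOn (fun u => mpgModel G' H x u + 1 / (2 * α) * ‖u - x‖ ^ 2) s p)
    (hx : x ∈ s) (hp : p ∈ s) (ht0 : 0 ≤ t) (ht1 : t ≤ 1) (hx' : x' = x + t • (p - x))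
    (hdec : G j x' ≤ G j x + t * ⟪G' j x, p - x⟫ + t * (γ / 2) * ‖p - x‖ ^ 2)
    (hy : y ∈ s) (hy0 : mpgModel G' H x y ≤ 0) :
    2 * t * ⟪x - y, p - x⟫ + (2 - α * γ) * t * ‖p - x‖ ^ 2 ≤
      2 * α * ((G j x + H j x) - (G j x' + H j x')) := by
  have hprox := mpgModel_prox hα hH hmin hp hy
  have hmodel := mul_le_mul_of_nonneg_left (le_mpgModel (G' := G') (H := H) (x := x) j p) hα.le
  have hαy := mul_nonpos_of_nonneg_of_nonpos hα.le hy0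
  have hθ := mul_nonpos_of_nonneg_of_nonpos ht0
    (show α * (⟪G' j x, p - x⟫ + H j p - H j x) + ⟪x - y, p - x⟫ + ‖p - x‖ ^ 2 ≤ 0 by linarith)
  have hF := mul_le_mul_of_nonneg_left (mpgStep_le (hH j) hx hp ht0 ht1 hx' hdec)
    (by positivity : (0 : ℝ) ≤ 2 * α)
  linarith

theorem mpgStep_quasiFejer {δ : ℝ} (hαγ : α * γ ≤ 2) (ht0 : 0 ≤ t) (hx' : x' = x + t • (p - x))
    (hdesc : 2 * t * ⟪x - y, p - x⟫ + (2 - α * γ) * t * ‖p - x‖ ^ 2 ≤ 2 * α * δ) :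
    ‖x' - y‖ ^ 2 ≤ ‖x - y‖ ^ 2 + (2 * α * δ + t ^ 2 * ‖p - x‖ ^ 2) := by
  have hexp : ‖x' - y‖ ^ 2 = ‖x - y‖ ^ 2 + 2 * t * ⟪x - y, p - x⟫ + t ^ 2 * ‖p - x‖ ^ 2 := by
    rw [hx', show x + t • (p - x) - y = (x - y) + t • (p - x) by module, norm_add_sq_real,
      real_inner_smul_right, norm_smul, Real.norm_eq_abs, mul_pow, sq_abs]
    ring
  have : 0 ≤ (2 - α * γ) * t * ‖p - x‖ ^ 2 := by
    have := sub_nonneg.2 hαγ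
    positivity
  linarith

end MPGStep

theorem mpgStep_error_le {α γ t a δ : ℝ} (hαγ : α * γ < 2) (ht0 : 0 ≤ t) (ht1 : t ≤ 1)
    (ha : 0 ≤ a) (hdesc : (2 - α * γ) * t * a ≤ 2 * α * δ) :
    2 * α * δ + t ^ 2 * a ≤ (2 * α + 2 * α / (2 - α * γ)) * δ := by
  have ht2 : t ^ 2 * a ≤ t * a := by
    gcongr
    nlinarith
  have : t * a ≤ 2 * α / (2 - α * γ) * δ := by
    rw [div_mul_eq_mul_div, le_div_iff₀ (sub_pos.2 hαγ)]
    linarith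
  linarith

theorem MPG_quasiFejer_general {n m : ℕ}
    (G : Fin m → EuclideanSpace ℝ (Fin n) → ℝ)
    (G' : Fin m → EuclideanSpace ℝ (Fin n) → EuclideanSpace ℝ (Fin n))
    (H : Fin m → EuclideanSpace ℝ (Fin n) → ℝ)
    (dom : Set (EuclideanSpace ℝ (Fin n)))
    (hGconv : ∀ j, ConvexOn ℝ Set.univ (G j))
    (hGdiff : ∀ j x, HasGradientAt (G j) (G' j x) x)
    (hHconv : ∀ j, ConvexOn ℝ dom (H j))
    (α γ : ℝ) (hα : 0 < α) (hγ2 : γ < 2 / α)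
    (x p : ℕ → EuclideanSpace ℝ (Fin n)) (t : ℕ → ℝ) (jstar : ℕ → Fin m)
    (hx : ∀ k, x k ∈ dom) (hp : ∀ k, p k ∈ dom)
    (hpmin : ∀ k, IsMinOn
      (fun u => (⨆ i, (⟪G' i (x k), u - x k⟫ + H i u - H i (x k))) +
        1 / (2 * α) * ‖u - x k‖ ^ 2) dom (p k))
    (ht : ∀ k, 0 < t k ∧ t k ≤ 1)
    (hiter : ∀ k, x (k + 1) = x k + t k • (p k - x k))
    (hdec : ∀ k, G (jstar k) (x (k + 1)) ≤ G (jstar k) (x k) +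
      t k * ⟪G' (jstar k) (x k), p k - x k⟫ + t k * (γ / 2) * ‖p k - x k‖ ^ 2)
    (hmono : ∀ k, ∀ j, G j (x (k + 1)) + H j (x (k + 1)) ≤ G j (x k) + H j (x k))
    (hA1 : ∀ y : ℕ → EuclideanSpace ℝ (Fin n), (∀ k, y k ∈ dom) →
      (∀ k j, G j (y (k + 1)) + H j (y (k + 1)) ≤ G j (y k) + H j (y k)) →
      ∃ ybar ∈ dom, ∀ k j, G j ybar + H j ybar ≤ G j (y k) + H j (y k)) :
    (∀ k, 0 ≤ 2 * α * ((G (jstar k) (x k) + H (jstar k) (x k)) -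
        (G (jstar k) (x (k + 1)) + H (jstar k) (x (k + 1)))) + t k ^ 2 * ‖p k - x k‖ ^ 2) ∧
    Summable (fun k => 2 * α * ((G (jstar k) (x k) + H (jstar k) (x k)) -
        (G (jstar k) (x (k + 1)) + H (jstar k) (x (k + 1)))) + t k ^ 2 * ‖p k - x k‖ ^ 2) ∧
    (∀ xhat, xhat ∈ dom → (∀ k j, G j xhat + H j xhat ≤ G j (x k) + H j (x k)) →
      ∀ k, ‖x (k + 1) - xhat‖ ^ 2 ≤ ‖x k - xhat‖ ^ 2 +
        (2 * α * ((G (jstar k) (x k) + H (jstar k) (x k)) -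
          (G (jstar k) (x (k + 1)) + H (jstar k) (x (k + 1)))) + t k ^ 2 * ‖p k - x k‖ ^ 2)) ∧
    (∃ M : ℝ, ∀ k, ‖x k‖ ≤ M) := by
  have : Nonempty (Fin m) := ⟨jstar 0⟩
  have hαγ : α * γ < 2 := by rwa [lt_div_iff₀ hα, mul_comm] at hγ2
  have hdesc : ∀ k, ∀ y ∈ dom, mpgModel G' H (x k) y ≤ 0 → _ := fun k y hy hy0 =>
    mpgStep_descent hα hHconv (hpmin k) (hx k) (hp k) (ht k).1.le (ht k).2 (hiter k) (hdec k)
      hy hy0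
  have hεnn : ∀ k, 0 ≤ 2 * α * ((G (jstar k) (x k) + H (jstar k) (x k)) -
      (G (jstar k) (x (k + 1)) + H (jstar k) (x (k + 1)))) + t k ^ 2 * ‖p k - x k‖ ^ 2 :=
    fun k => add_nonneg (mul_nonneg (by positivity) (sub_nonneg.2 (hmono k _))) (by positivity)
  have hfejer : ∀ y ∈ dom, (∀ k j, G j y + H j y ≤ G j (x k) + H j (x k)) → ∀ k, _ :=
    fun y hy hyF k => mpgStep_quasiFejer hαγ.le (ht k).1.le (hiter k)
      (hdesc k y hy (mpgModel_nonpos hGconv (fun i => hGdiff i (x k)) (hyF k)))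
  obtain ⟨xb, hxb, hxbF⟩ := hA1 x hx hmono
  have hΔ : ∀ j, Summable fun k =>
      (G j (x k) + H j (x k)) - (G j (x (k + 1)) + H j (x (k + 1))) :=
    fun j => summable_sub_succ_of_antitone (antitone_nat_of_succ_le fun k => hmono k j)
      fun k => hxbF k j
  have hεsum := ((summable_sum fun j _ => hΔ j).mul_left
      (2 * α + 2 * α / (2 - α * γ))).of_nonneg_of_le hεnn fun k =>
    (mpgStep_error_le hαγ (ht k).1.le (ht k).2 (sq_nonneg _)
      (by simpa using hdesc k (x k) (hx k) mpgModel_self.le)).trans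
      (mul_le_mul_of_nonneg_left (Finset.single_le_sum (fun j _ => sub_nonneg.2 (hmono k j))
        (Finset.mem_univ (jstar k))) (by positivity))
  exact ⟨hεnn, hεsum, hfejer, exists_norm_le_of_quasiFejer hεsum hεnn (hfejer xb hxb hxbF)⟩

/-- Under the completeness assumption (A1), the MPG sequence is quasi-Fejér convergent to
`Ω = {x ∈ dom F : F(x) ⪯ F(x^k) ∀k}` with summable errors
`ε_k = 2α(F_{j*_k}(x^k) - F_{j*_k}(x^{k+1})) + t_k²‖d^k‖²`, and hence bounded. -/
theorem MPG_quasiFejer {n m : ℕ} (hm : 0 < m)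
    (G : Fin m → EuclideanSpace ℝ (Fin n) → ℝ)
    (G' : Fin m → EuclideanSpace ℝ (Fin n) → EuclideanSpace ℝ (Fin n))
    (H : Fin m → EuclideanSpace ℝ (Fin n) → ℝ)
    (dom : Set (EuclideanSpace ℝ (Fin n)))
    (hGconv : ∀ j, ConvexOn ℝ Set.univ (G j))
    (hGdiff : ∀ j x, HasGradientAt (G j) (G' j x) x)
    (hHconv : ∀ j, ConvexOn ℝ dom (H j))
    (hHcont : ∀ j, ContinuousOn (H j) dom)
    (hdomne : dom.Nonempty) (hdomcl : IsClosed dom) (hdomconv : Convex ℝ dom)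
    (α γ : ℝ) (hα : 0 < α) (hγ : 0 < γ) (hγ2 : γ < 2 / α)
    (x p : ℕ → EuclideanSpace ℝ (Fin n)) (t : ℕ → ℝ) (jstar : ℕ → Fin m)
    (hx : ∀ k, x k ∈ dom) (hp : ∀ k, p k ∈ dom)
    (hpmin : ∀ k, IsMinOn
      (fun u => (⨆ i, (⟪G' i (x k), u - x k⟫ + H i u - H i (x k))) +
        1 / (2 * α) * ‖u - x k‖ ^ 2) dom (p k))
    (ht : ∀ k, 0 < t k ∧ t k ≤ 1)
    (hiter : ∀ k, x (k + 1) = x k + t k • (p k - x k))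
    (hjstar : ∀ k, ∀ j, ⟪G' j (x k), p k - x k⟫ ≤ ⟪G' (jstar k) (x k), p k - x k⟫)
    (hdec : ∀ k, G (jstar k) (x (k + 1)) ≤ G (jstar k) (x k) +
      t k * ⟪G' (jstar k) (x k), p k - x k⟫ + t k * (γ / 2) * ‖p k - x k‖ ^ 2)
    (hmono : ∀ k, ∀ j, G j (x (k + 1)) + H j (x (k + 1)) ≤ G j (x k) + H j (x k))
    (hA1 : ∀ y : ℕ → EuclideanSpace ℝ (Fin n), (∀ k, y k ∈ dom) →
      (∀ k j, G j (y (k + 1)) + H j (y (k + 1)) ≤ G j (y k) + H j (y k)) →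
      ∃ ybar ∈ dom, ∀ k j, G j ybar + H j ybar ≤ G j (y k) + H j (y k)) :
    (∀ k, 0 ≤ 2 * α * ((G (jstar k) (x k) + H (jstar k) (x k)) -
        (G (jstar k) (x (k + 1)) + H (jstar k) (x (k + 1)))) + t k ^ 2 * ‖p k - x k‖ ^ 2) ∧
    Summable (fun k => 2 * α * ((G (jstar k) (x k) + H (jstar k) (x k)) -
        (G (jstar k) (x (k + 1)) + H (jstar k) (x (k + 1)))) + t k ^ 2 * ‖p k - x k‖ ^ 2) ∧
    (∀ xhat, xhat ∈ dom → (∀ k j, G j xhat + H j xhat ≤ G j (x k) + H j (x k)) →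
      ∀ k, ‖x (k + 1) - xhat‖ ^ 2 ≤ ‖x k - xhat‖ ^ 2 +
        (2 * α * ((G (jstar k) (x k) + H (jstar k) (x k)) -
          (G (jstar k) (x (k + 1)) + H (jstar k) (x (k + 1)))) + t k ^ 2 * ‖p k - x k‖ ^ 2)) ∧
    (∃ M : ℝ, ∀ k, ‖x k‖ ≤ M) :=
  MPG_quasiFejer_general G G' H dom hGconv hGdiff hHconv α γ hα hγ2 x p t jstar hx hp hpmin ht hiter
    hdec hmono hA1
end
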